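/- The probability generating function of the generalized Poisson distribution \mathcal{P}(\lambda, m) is P(z) = \sum_{j \geq 0} p_j(\lambda, m) z^j = \exp(\lambda(z-1)) z^m L_m(-\lambda(1-z)^2/z) for z \in (0, 1]. -/

import Mathlib

/-!
Write `C_n(x; a) = ∑_k (n choose k) x(x-1)⋯(x-k+1) (-1/a)^k` for the Charlier polynomials. Reflecting
the sum defining `L_a^{(b-a)}` gives `a! L_a^{(b-a)}(λ) = (-λ)^a C_a(b; λ)`, and with the duality
`C_m(j; λ) = C_j(m; λ)` this turns the photon-counting probabilities into
`p_j = e^{-λ} (λ^m/m!) (λ^j/j!) C_m(j; λ)^2`, without the case split on `m ∧ j`.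

Expanding both Charlier factors in falling factorials reduces the generating function to the series
`∑_j j^{(k)} j^{(l)} x^j/j!`; shifting `j` by `l` and applying the Chu–Vandermonde identity for falling
factorials evaluates each one as `e^x` times a polynomial. The remaining finite sums factor and collapse
by the binomial theorem, leaving `e^x ∑_r r! (m choose r)^2 (x/λ^2)^r (1 - x/λ)^{2(m-r)}`, which at
`x = λz` is the Laguerre side term by term.
-/

open Finset

/-- The generalized Laguerre polynomial
`L_k^{(α)}(x) = ∑_{i=0}^k (k+α choose k-i) (-x)^i / i!` (nonnegative integer
parameter `α`). -/
noncomputable def lag (k α : ℕ) (x : ℝ) : ℝ :=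
  ∑ i ∈ Finset.range (k + 1),
    ((k + α).choose (k - i) : ℝ) * (-x) ^ i / (Nat.factorial i : ℝ)

/-- The photon-counting probabilities
`p_j(λ,m) = ((m∧j)!/(m∨j)!) λ^{|m-j|} e^{-λ} (L_{m∧j}^{(|m-j|)}(λ))²`. -/
noncomputable def pgen (lam : ℝ) (m j : ℕ) : ℝ :=
  ((Nat.factorial (min m j) : ℝ) / (Nat.factorial (max m j) : ℝ)) *
    lam ^ (max m j - min m j) * Real.exp (-lam) *
    (lag (min m j) (max m j - min m j) lam) ^ 2

noncomputable def charlier (n : ℕ) (a : ℝ) (x : ℕ) : ℝ :=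
  ∑ k ∈ range (n + 1), (n.choose k : ℝ) * x.descFactorial k * (-a⁻¹) ^ k

theorem charlier_eq_sum_factorial_mul_choose_mul_choose {n N : ℕ} (h : n < N) (a : ℝ) (x : ℕ) :
    charlier n a x =
      ∑ k ∈ range N, (k.factorial : ℝ) * n.choose k * x.choose k * (-a⁻¹) ^ k := by
  rw [charlier, sum_subset (range_subset_range.2 h) fun k _ hk => by
    rw [Nat.choose_eq_zero_of_lt (by simpa using hk)]; simp]
  refine sum_congr rfl fun k _ => ?_
  rw [Nat.descFactorial_eq_factorial_mul_choose]
  push_cast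
  ring

theorem charlier_comm (n x : ℕ) (a : ℝ) : charlier n a x = charlier x a n := by
  rw [charlier_eq_sum_factorial_mul_choose_mul_choose (N := n + x + 1) (by omega),
    charlier_eq_sum_factorial_mul_choose_mul_choose (N := n + x + 1) (by omega)]
  exact sum_congr rfl fun k _ => by ring

theorem factorial_mul_lag_eq_charlier {a b : ℕ} (hab : a ≤ b) {c : ℝ} (hc : c ≠ 0) :
    a.factorial * lag a (b - a) c = (-c) ^ a * charlier a c b := by
  rw [lag, charlier, Nat.add_sub_cancel' hab, mul_sum, mul_sum, ← sum_range_reflect]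
  refine sum_congr rfl fun i hi => ?_
  obtain ⟨d, rfl⟩ := Nat.exists_eq_add_of_le (Nat.lt_succ_iff.mp (mem_range.mp hi))
  rw [show i + d + 1 - 1 - i = d by omega, show i + d - d = i by omega,
    Nat.descFactorial_eq_factorial_mul_choose, Nat.cast_choose ℝ (Nat.le_add_right i d),
    Nat.add_sub_cancel_left, pow_add, neg_inv, inv_pow]
  have : (-c) ^ i ≠ 0 := pow_ne_zero _ (neg_ne_zero.2 hc)
  push_cast
  field_simp

theorem pgen_comm (lam : ℝ) (m j : ℕ) : pgen lam m j = pgen lam j m := by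
  simp only [pgen, min_comm, max_comm]

theorem pgen_eq_charlier_sq {lam : ℝ} (hlam : lam ≠ 0) (m j : ℕ) :
    pgen lam m j = Real.exp (-lam) * (lam ^ m / m.factorial) * (lam ^ j / j.factorial) *
      charlier m lam j ^ 2 := by
  wlog h : m ≤ j generalizing m j
  · rw [pgen_comm, this j m (le_of_not_ge h), charlier_comm]
    ring
  obtain ⟨d, rfl⟩ := Nat.exists_eq_add_of_le h
  have hlag := factorial_mul_lag_eq_charlier h hlam
  rw [Nat.add_sub_cancel_left] at hlag
  have hfac : (m.factorial : ℝ) ≠ 0 := by positivity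
  rw [pgen, min_eq_left h, max_eq_right h, Nat.add_sub_cancel_left,
    eq_div_of_mul_eq hfac ((mul_comm _ _).trans hlag), div_pow, mul_pow, ← pow_mul, mul_comm m,
    pow_mul, neg_sq]
  field_simp
  ring

theorem Nat.cast_add_descFactorial_div_factorial {K : Type*} [Field K] [CharZero K] (i k : ℕ) :
    ((i + k).descFactorial k : K) / (i + k).factorial = (i.factorial : K)⁻¹ := by
  rw [← Nat.factorial_mul_descFactorial (Nat.le_add_left k i), Nat.add_sub_cancel, Nat.cast_mul,
    div_mul_cancel_right₀ (by exact_mod_cast (Nat.descFactorial_pos.2 (Nat.le_add_left k i)).ne')]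

theorem Nat.cast_add_descFactorial {R : Type*} [Ring R] (i l k : ℕ) :
    ((i + l).descFactorial k : R) =
      ∑ r ∈ range (k + 1), (k.choose r : R) * l.descFactorial r * i.descFactorial (k - r) := by
  rw [← Polynomial.descPochhammer_smeval_eq_descFactorial, add_comm, Nat.cast_add,
    Ring.descPochhammer_smeval_add _ (Nat.cast_commute _ _),
    Nat.sum_antidiagonal_eq_sum_range_succ_mk]
  simp only [Polynomial.descPochhammer_smeval_eq_descFactorial, mul_assoc]

theorem hasSum_descFactorial_mul_pow_div_factorial (k : ℕ) (x : ℝ) :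
    HasSum (fun j : ℕ => j.descFactorial k * x ^ j / j.factorial) (x ^ k * Real.exp x) := by
  rw [← hasSum_nat_add_iff' k, sum_eq_zero fun j hj => by
    rw [Nat.descFactorial_eq_zero_iff_lt.2 (mem_range.1 hj)]; simp, sub_zero]
  have hterm (i : ℕ) : ((i + k).descFactorial k : ℝ) * x ^ (i + k) / (i + k).factorial =
      x ^ k * (x ^ i / i.factorial) := by
    rw [mul_div_right_comm, Nat.cast_add_descFactorial_div_factorial, pow_add]
    ring
  simpa only [hterm, Real.exp_eq_exp_ℝ] using
    (NormedSpace.expSeries_div_hasSum_exp x).mul_left (x ^ k)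

theorem hasSum_descFactorial_mul_descFactorial_mul_pow_div_factorial (k l : ℕ) (x : ℝ) :
    HasSum (fun j : ℕ => j.descFactorial k * j.descFactorial l * x ^ j / j.factorial)
      (Real.exp x * ∑ r ∈ range (k + 1), (k.choose r : ℝ) * l.descFactorial r * x ^ (k - r + l)) := by
  rw [← hasSum_nat_add_iff' l, sum_eq_zero (s := range l) fun j hj => by
    rw [Nat.descFactorial_eq_zero_iff_lt.2 (mem_range.1 hj)]; simp, sub_zero]
  have hterm (i : ℕ) : ((i + l).descFactorial k : ℝ) * (i + l).descFactorial l * x ^ (i + l) /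
      (i + l).factorial = ∑ r ∈ range (k + 1), (k.choose r : ℝ) * l.descFactorial r * x ^ l *
        (i.descFactorial (k - r) * x ^ i / i.factorial) := by
    rw [mul_div_assoc, mul_assoc, mul_div_left_comm, Nat.cast_add_descFactorial_div_factorial,
      Nat.cast_add_descFactorial, sum_mul]
    refine sum_congr rfl fun r _ => ?_
    rw [pow_add]
    ring
  have hval : Real.exp x * ∑ r ∈ range (k + 1), (k.choose r : ℝ) * l.descFactorial r *
      x ^ (k - r + l) = ∑ r ∈ range (k + 1), (k.choose r : ℝ) * l.descFactorial r * x ^ l *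
        (x ^ (k - r) * Real.exp x) := by
    rw [mul_sum]
    exact sum_congr rfl fun r _ => by ring
  rw [hval]
  simpa only [hterm] using hasSum_sum fun r (_ : r ∈ range (k + 1)) =>
    (hasSum_descFactorial_mul_pow_div_factorial (k - r) x).mul_left
      ((k.choose r : ℝ) * l.descFactorial r * x ^ l)

section CommRing

variable {R : Type*} [CommRing R]

theorem sum_choose_mul_choose_mul_pow_mul_pow (m r : ℕ) (u y : R) :
    ∑ k ∈ range (m + 1), (m.choose k : R) * k.choose r * u ^ k * y ^ (k - r) =
      m.choose r * u ^ r * (1 + u * y) ^ (m - r) := by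
  rcases lt_or_ge m r with hmr | hrm
  · rw [Nat.choose_eq_zero_of_lt hmr, sum_eq_zero fun k hk => by
      rw [Nat.choose_eq_zero_of_lt ((mem_range.1 hk).trans_le hmr)]; simp]
    simp
  obtain ⟨d, rfl⟩ := Nat.exists_eq_add_of_le hrm
  rw [show r + d + 1 = r + (d + 1) by ring, sum_range_add, sum_eq_zero (s := range r) fun k hk => by
      rw [Nat.choose_eq_zero_of_lt (mem_range.1 hk)]; simp, zero_add, Nat.add_sub_cancel_left,
    add_comm 1, add_pow, mul_sum]
  refine sum_congr rfl fun s _ => ?_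
  have hchoose : ((r + d).choose (r + s) : R) * (r + s).choose r =
      (r + d).choose r * d.choose s := by
    have := Nat.choose_mul (n := r + d) (Nat.le_add_right r s)
    rw [Nat.add_sub_cancel_left, Nat.add_sub_cancel_left] at this
    exact_mod_cast congrArg (Nat.cast (R := R)) this
  rw [Nat.add_sub_cancel_left, pow_add, mul_pow]
  linear_combination (u ^ r * u ^ s * y ^ s) * hchoose

theorem sum_sum_choose_mul_sum_descFactorial (m n : ℕ) (u v x : R) :
    ∑ k ∈ range (m + 1), ∑ l ∈ range (n + 1), (m.choose k : R) * u ^ k * (n.choose l * v ^ l) *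
        ∑ r ∈ range (k + 1), (k.choose r : R) * l.descFactorial r * x ^ (k - r + l) =
      ∑ r ∈ range (m + 1), (r.factorial : R) * m.choose r * n.choose r * (u * v * x) ^ r *
        (1 + u * x) ^ (m - r) * (1 + v * x) ^ (n - r) := by
  have hext : ∀ k ∈ range (m + 1), ∀ l : ℕ,
      ∑ r ∈ range (k + 1), (k.choose r : R) * l.descFactorial r * x ^ (k - r + l) =
        ∑ r ∈ range (m + 1), (k.choose r : R) * l.descFactorial r * x ^ (k - r + l) :=
    fun k hk l => sum_subset (range_subset_range.2 (by simpa using hk)) fun r _ hr => by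
      rw [Nat.choose_eq_zero_of_lt (by simpa using hr)]; simp
  have hfactor (r : ℕ) : ∑ k ∈ range (m + 1), ∑ l ∈ range (n + 1),
      (m.choose k : R) * u ^ k * (n.choose l * v ^ l) *
        ((k.choose r : R) * l.descFactorial r * x ^ (k - r + l)) =
      (∑ k ∈ range (m + 1), (m.choose k : R) * k.choose r * u ^ k * x ^ (k - r)) *
        (r.factorial * ∑ l ∈ range (n + 1),
          (n.choose l : R) * l.choose r * (v * x) ^ l * 1 ^ (l - r)) := by
    rw [mul_sum, sum_mul_sum]
    refine sum_congr rfl fun k _ => sum_congr rfl fun l _ => ?_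
    rw [Nat.descFactorial_eq_factorial_mul_choose, pow_add, mul_pow]
    push_cast
    ring
  rw [sum_congr rfl fun k hk => sum_congr rfl fun l _ => by rw [hext k hk l, mul_sum]]
  rw [sum_congr rfl fun k _ => sum_comm, sum_comm]
  refine sum_congr rfl fun r _ => ?_
  rw [hfactor, sum_choose_mul_choose_mul_pow_mul_pow, sum_choose_mul_choose_mul_pow_mul_pow,
    mul_one, mul_pow]
  ring

end CommRing

theorem hasSum_pow_div_factorial_mul_charlier_mul_charlier (m n : ℕ) (a b x : ℝ) :
    HasSum (fun j : ℕ => x ^ j / j.factorial * (charlier m a j * charlier n b j))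
      (Real.exp x * ∑ r ∈ range (m + 1), (r.factorial : ℝ) * m.choose r * n.choose r *
        (x / (a * b)) ^ r * (1 - x / a) ^ (m - r) * (1 - x / b) ^ (n - r)) := by
  have hexpand (j : ℕ) : x ^ j / j.factorial * (charlier m a j * charlier n b j) =
      ∑ k ∈ range (m + 1), ∑ l ∈ range (n + 1),
        (m.choose k : ℝ) * (-a⁻¹) ^ k * (n.choose l * (-b⁻¹) ^ l) *
          (j.descFactorial k * j.descFactorial l * x ^ j / j.factorial) := by
    rw [charlier, charlier, sum_mul_sum, mul_sum]
    exact sum_congr rfl fun k _ => by rw [mul_sum]; exact sum_congr rfl fun l _ => by ring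
  have h := hasSum_sum fun k (_ : k ∈ range (m + 1)) => hasSum_sum fun l (_ : l ∈ range (n + 1)) =>
    (hasSum_descFactorial_mul_descFactorial_mul_pow_div_factorial k l x).mul_left
      ((m.choose k : ℝ) * (-a⁻¹) ^ k * (n.choose l * (-b⁻¹) ^ l))
  simp only [← hexpand, mul_left_comm _ (Real.exp x), ← mul_sum] at h
  have hu (c : ℝ) : 1 + -c⁻¹ * x = 1 - x / c := by ring
  have huv : -a⁻¹ * -b⁻¹ * x = x / (a * b) := by ring
  rwa [sum_sum_choose_mul_sum_descFactorial, huv, hu, hu] at h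

theorem pow_mul_lag_zero {c z : ℝ} (hc : c ≠ 0) (hz : z ≠ 0) (m : ℕ) :
    z ^ m * lag m 0 (-c * (1 - z) ^ 2 / z) =
      c ^ m / m.factorial * ∑ r ∈ range (m + 1), (r.factorial : ℝ) * m.choose r * m.choose r *
        (z / c) ^ r * (1 - z) ^ (m - r) * (1 - z) ^ (m - r) := by
  rw [lag, add_zero, mul_sum, mul_sum, ← sum_range_reflect]
  refine sum_congr rfl fun r hr => ?_
  obtain ⟨d, rfl⟩ := Nat.exists_eq_add_of_le (Nat.lt_succ_iff.mp (mem_range.mp hr))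
  rw [show r + d + 1 - 1 - r = d by omega, show r + d - d = r by omega, Nat.add_sub_cancel_left,
    Nat.cast_choose ℝ (Nat.le_add_right r d), Nat.add_sub_cancel_left, neg_mul, neg_div, neg_neg,
    div_pow, div_pow, mul_pow, ← pow_mul]
  field_simp
  ring

/-- The probability generating function of `𝒫(λ,m)` is
`P(z) = exp(λ(z-1)) z^m L_m(-λ(1-z)²/z)` for `z ∈ (0,1]`. -/
theorem pgen_pgf (lam : ℝ) (hlam : 0 < lam) (m : ℕ) (z : ℝ) (hz : z ∈ Set.Ioc (0 : ℝ) 1) :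
    ∑' j : ℕ, pgen lam m j * z ^ j =
      Real.exp (lam * (z - 1)) * z ^ m * lag m 0 (-lam * (1 - z) ^ 2 / z) := by
  have hterm (j : ℕ) : pgen lam m j * z ^ j = Real.exp (-lam) * (lam ^ m / m.factorial) *
      ((lam * z) ^ j / j.factorial * (charlier m lam j * charlier m lam j)) := by
    rw [pgen_eq_charlier_sq hlam.ne', mul_pow]
    ring
  have hx : lam * z / (lam * lam) = z / lam := by field_simp
  have hx' : lam * z / lam = z := by field_simp
  rw [tsum_congr hterm, tsum_mul_left,
    (hasSum_pow_div_factorial_mul_charlier_mul_charlier m m lam lam (lam * z)).tsum_eq, hx, hx',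
    mul_assoc (Real.exp _) (z ^ m), pow_mul_lag_zero hlam.ne' hz.1.ne', mul_sub_one, Real.exp_sub,
    Real.exp_neg]
  ring
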